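/- arXiv:1912.08152 — 8 statements merged into one kernel-verified Lean document; each statement's English description precedes it below -/
import Mathlib

section
/- Let (v,e) : I → ℝ² be a differentiable solution on an interval I of the system v′ = −v² − e, e′ = (1 − e) v, and suppose e(θ) ≠ 1 for all θ ∈ I. Then the quantity (v² + 2e − 1)/(e − 1)² is constant along the solution, i.e. there exists C ∈ ℝ with v(θ)² + 2 e(θ) − 1 = C (e(θ) − 1)² for all θ ∈ I. -/
/-!
Along a solution, `N = v² + 2e - 1` and `D = (e - 1)²` both satisfy the scalar linear equation
`X' = -2v X`. Hence `N / D` has zero derivative wherever `e ≠ 1`, and is constant on the interval.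
-/

theorem Convex.is_const_of_hasDerivWithinAt_eq_zero {E : Type*} [NormedAddCommGroup E]
    [NormedSpace ℝ E] {f : ℝ → E} {s : Set ℝ} (hs : Convex ℝ s)
    (hf : ∀ x ∈ s, HasDerivWithinAt f 0 s x) {x y : ℝ} (hx : x ∈ s) (hy : y ∈ s) :
    f x = f y := by
  have h := hs.norm_image_sub_le_of_norm_hasDerivWithin_le (f' := fun _ => 0) (C := 0) hf
    (fun _ _ => by simp) hx hy
  rw [zero_mul, norm_le_zero_iff, sub_eq_zero] at h
  exact h.symm

theorem HasDerivAt.div_eq_zero_of_deriv_proportional {f g : ℝ → ℝ} {a x : ℝ}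
    (hf : HasDerivAt f (a * f x) x) (hg : HasDerivAt g (a * g x) x) (hgx : g x ≠ 0) :
    HasDerivAt (fun y => f y / g y) 0 x :=
  (hf.fun_div hg hgx).congr_deriv (by ring)

section ColdPlasma

variable {v e : ℝ → ℝ} {θ : ℝ}

theorem hasDerivAt_sq_add_two_mul_sub_one (hv : HasDerivAt v (-(v θ)^2 - e θ) θ)
    (he : HasDerivAt e ((1 - e θ) * v θ) θ) :
    HasDerivAt (fun t => (v t)^2 + 2 * e t - 1) (-2 * v θ * ((v θ)^2 + 2 * e θ - 1)) θ :=
  (((hv.fun_pow 2).fun_add (he.const_mul 2)).sub_const 1).congr_deriv (by push_cast; ring)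

theorem hasDerivAt_sub_one_sq (he : HasDerivAt e ((1 - e θ) * v θ) θ) :
    HasDerivAt (fun t => (e t - 1)^2) (-2 * v θ * (e θ - 1)^2) θ :=
  ((he.sub_const 1).fun_pow 2).congr_deriv (by push_cast; ring)

end ColdPlasma

/-- Along any differentiable solution of the characteristic derivative
system `v' = -v² - e`, `e' = (1 - e) v` on an interval where `e ≠ 1`, the quantity
`(v² + 2e - 1)/(e-1)²` is constant. -/
theorem stmt1 (I : Set ℝ) (hI : I.OrdConnected) (v e : ℝ → ℝ)
    (hv : ∀ θ ∈ I, HasDerivAt v (-(v θ)^2 - e θ) θ)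
    (he : ∀ θ ∈ I, HasDerivAt e ((1 - e θ) * v θ) θ)
    (hne : ∀ θ ∈ I, e θ ≠ 1) :
    ∃ C : ℝ, ∀ θ ∈ I, (v θ)^2 + 2 * e θ - 1 = C * (e θ - 1)^2 := by
  rcases I.eq_empty_or_nonempty with rfl | ⟨θ₀, hθ₀⟩
  · exact ⟨0, fun _ h => h.elim⟩
  have hD : ∀ θ ∈ I, (e θ - 1)^2 ≠ 0 := fun θ hθ => pow_ne_zero 2 (sub_ne_zero.mpr (hne θ hθ))
  have hF : ∀ θ ∈ I,
      HasDerivWithinAt (fun t => ((v t)^2 + 2 * e t - 1) / (e t - 1)^2) 0 I θ := fun θ hθ =>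
    (HasDerivAt.div_eq_zero_of_deriv_proportional
      (hasDerivAt_sq_add_two_mul_sub_one (hv θ hθ) (he θ hθ))
      (hasDerivAt_sub_one_sq (he θ hθ)) (hD θ hθ)).hasDerivWithinAt
  refine ⟨((v θ₀)^2 + 2 * e θ₀ - 1) / (e θ₀ - 1)^2, fun θ hθ => ?_⟩
  rw [hI.convex.is_const_of_hasDerivWithinAt_eq_zero hF hθ₀ hθ, div_mul_cancel₀ _ (hD θ hθ)]
end

section
/- Let (v,e) be the maximal forward solution of the system v′ = −v² − e, e′ = (1 − e) v with initial data v(0) = v₀, e(0) = e₀ satisfying v₀² + 2 e₀ − 1 ≥ 0. Then the maximal interval of existence [0,T) is bounded (T < ∞), and |v(θ)| + |e(θ)| → ∞ as θ → T⁻; that is, the solution blows up in finite time. -/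
/-!
Writing `v = x' / x` and `e = 1 - (1 - e₀) / x` linearizes the system to `x'' + x = 1 - e₀` with
`x(0) = 1`, `x'(0) = v₀`, so `x θ = 1 - e₀ + e₀ cos θ + v₀ sin θ`. The minimum of `x` is
`1 - e₀ - √(e₀² + v₀²)`, which is `≤ 0` exactly when `v₀² + 2 e₀ - 1 ≥ 0`; hence `x` has a first
positive zero `t`. By uniqueness the solution is the explicit one on `[0, t)`, where
`|v| + |1 - e| = (|x'| + |1 - e₀|) / x → ∞`; maximality then forces `T = t`.
-/

open Real Set Filter Topology

theorem eqOn_Icc_of_hasDerivAt_of_locallyLipschitz {E : Type*} [NormedAddCommGroup E]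
    [NormedSpace ℝ E] {F : E → E} (hF : LocallyLipschitz F) {f g : ℝ → E} {a b : ℝ}
    (hf : ∀ t ∈ Icc a b, HasDerivAt f (F (f t)) t)
    (hg : ∀ t ∈ Icc a b, HasDerivAt g (F (g t)) t) (ha : f a = g a) :
    EqOn f g (Icc a b) := by
  have hfc : ContinuousOn f (Icc a b) := fun t ht => (hf t ht).continuousAt.continuousWithinAt
  have hgc : ContinuousOn g (Icc a b) := fun t ht => (hg t ht).continuousAt.continuousWithinAt
  set K := f '' Icc a b ∪ g '' Icc a b
  obtain ⟨L, hL⟩ := hF.locallyLipschitzOn.exists_lipschitzOnWith_of_compact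
    ((isCompact_Icc.image_of_continuousOn hfc).union (isCompact_Icc.image_of_continuousOn hgc))
    (s := K)
  exact ODE_solution_unique_of_mem_Icc_right (v := fun _ => F) (s := fun _ => K)
    (fun _ _ => hL) hfc (fun t ht => (hf t (Ico_subset_Icc_self ht)).hasDerivWithinAt)
    (fun t ht => Or.inl (mem_image_of_mem f (Ico_subset_Icc_self ht))) hgc
    (fun t ht => (hg t (Ico_subset_Icc_self ht)).hasDerivWithinAt)
    (fun t ht => Or.inr (mem_image_of_mem g (Ico_subset_Icc_self ht))) ha

theorem exists_first_zero {f : ℝ → ℝ} (hf : Continuous f) {a b : ℝ} (hab : a ≤ b) (ha : 0 < f a)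
    (hb : f b ≤ 0) : ∃ t ∈ Ioc a b, f t = 0 ∧ ∀ s ∈ Ico a t, 0 < f s := by
  set S := Icc a b ∩ f ⁻¹' {0}
  have hS : IsCompact S := isCompact_Icc.inter_right (isClosed_singleton.preimage hf)
  have hSne : S.Nonempty := by
    obtain ⟨z, hz, hfz⟩ := intermediate_value_Icc' hab hf.continuousOn ⟨hb, ha.le⟩
    exact ⟨z, hz, hfz⟩
  obtain ⟨⟨hat, htb⟩, hft⟩ := hS.sInf_mem hSne
  refine ⟨sInf S, ⟨lt_of_le_of_ne hat ?_, htb⟩, hft, fun s hs => ?_⟩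
  · exact fun h => ha.ne' (h ▸ hft)
  by_contra! hfs
  obtain ⟨z, hz, hfz⟩ := intermediate_value_Icc' hs.1 hf.continuousOn ⟨hfs, ha.le⟩
  have : sInf S ≤ z := csInf_le hS.bddBelow ⟨⟨hz.1, hz.2.trans (hs.2.le.trans htb)⟩, hfz⟩
  linarith [hz.2, hs.2]

noncomputable section

namespace ColdPlasma

def SolvesOn (v e : ℝ → ℝ) (T : EReal) : Prop :=
  ∀ θ : ℝ, 0 ≤ θ → (θ : EReal) < T →
    HasDerivAt v (-(v θ) ^ 2 - e θ) θ ∧ HasDerivAt e ((1 - e θ) * v θ) θ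

def field (p : ℝ × ℝ) : ℝ × ℝ := (-p.1 ^ 2 - p.2, (1 - p.2) * p.1)

lemma locallyLipschitz_field : LocallyLipschitz field :=
  ContDiff.locallyLipschitz (𝕂 := ℝ) (by unfold field; fun_prop)

lemma SolvesOn.hasDerivAt_prod {v e : ℝ → ℝ} {T : EReal} (h : SolvesOn v e T) {θ : ℝ}
    (h0 : 0 ≤ θ) (hθ : (θ : EReal) < T) :
    HasDerivAt (fun t => (v t, e t)) (field (v θ, e θ)) θ :=
  (h θ h0 hθ).1.prodMk (h θ h0 hθ).2

variable (v₀ e₀ : ℝ)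

def osc (θ : ℝ) : ℝ := 1 - e₀ + e₀ * cos θ + v₀ * sin θ

def oscDeriv (θ : ℝ) : ℝ := v₀ * cos θ - e₀ * sin θ

def solV (θ : ℝ) : ℝ := oscDeriv v₀ e₀ θ / osc v₀ e₀ θ

def solE (θ : ℝ) : ℝ := 1 - (1 - e₀) / osc v₀ e₀ θ

lemma continuous_osc : Continuous (osc v₀ e₀) := by unfold osc; fun_prop

lemma continuous_oscDeriv : Continuous (oscDeriv v₀ e₀) := by unfold oscDeriv; fun_prop

lemma hasDerivAt_osc (θ : ℝ) : HasDerivAt (osc v₀ e₀) (oscDeriv v₀ e₀ θ) θ := by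
  have := (((hasDerivAt_cos θ).const_mul e₀).const_add (1 - e₀)).add
    ((hasDerivAt_sin θ).const_mul v₀)
  refine this.congr_deriv ?_; unfold oscDeriv; ring

lemma hasDerivAt_oscDeriv (θ : ℝ) :
    HasDerivAt (oscDeriv v₀ e₀) (1 - e₀ - osc v₀ e₀ θ) θ := by
  have := ((hasDerivAt_cos θ).const_mul v₀).sub ((hasDerivAt_sin θ).const_mul e₀)
  refine this.congr_deriv ?_; unfold osc; ring

lemma osc_sub_sq_add_oscDeriv_sq (θ : ℝ) :
    (osc v₀ e₀ θ - (1 - e₀)) ^ 2 + oscDeriv v₀ e₀ θ ^ 2 = e₀ ^ 2 + v₀ ^ 2 := by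
  unfold osc oscDeriv; linear_combination (e₀ ^ 2 + v₀ ^ 2) * sin_sq_add_cos_sq θ

lemma osc_zero : osc v₀ e₀ 0 = 1 := by simp [osc]

lemma solV_zero : solV v₀ e₀ 0 = v₀ := by simp [solV, osc_zero, oscDeriv]

lemma solE_zero : solE v₀ e₀ 0 = e₀ := by simp [solE, osc_zero]

variable {v₀ e₀}

lemma hasDerivAt_solV {θ : ℝ} (hθ : osc v₀ e₀ θ ≠ 0) :
    HasDerivAt (solV v₀ e₀) (-solV v₀ e₀ θ ^ 2 - solE v₀ e₀ θ) θ := by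
  refine ((hasDerivAt_oscDeriv v₀ e₀ θ).div (hasDerivAt_osc v₀ e₀ θ) hθ).congr_deriv ?_
  unfold solV solE; field_simp; ring

lemma hasDerivAt_solE {θ : ℝ} (hθ : osc v₀ e₀ θ ≠ 0) :
    HasDerivAt (solE v₀ e₀) ((1 - solE v₀ e₀ θ) * solV v₀ e₀ θ) θ := by
  refine (((hasDerivAt_osc v₀ e₀ θ).inv hθ).const_mul (1 - e₀) |>.const_sub 1).congr_deriv ?_
  unfold solV solE; field_simp; ring

-- The minimum of `osc` is `1 - e₀ - √(e₀² + v₀²)`, attained at the argument of `-e₀ - v₀ i`.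
lemma exists_osc_nonpos (h : v₀ ^ 2 + 2 * e₀ - 1 ≥ 0) : ∃ θ > 0, osc v₀ e₀ θ ≤ 0 := by
  set z : ℂ := ⟨-e₀, -v₀⟩
  have hz : z ≠ 0 := by
    intro hz
    have he : e₀ = 0 := by simpa [z] using congrArg Complex.re hz
    have hv : v₀ = 0 := by simpa [z] using congrArg Complex.im hz
    subst he hv; norm_num at h
  have hnorm : ‖z‖ ^ 2 = e₀ ^ 2 + v₀ ^ 2 := by
    rw [Complex.sq_norm, Complex.normSq_apply]; simp only [z]; ring
  have hnorm_pos : 0 < ‖z‖ := norm_pos_iff.2 hz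
  refine ⟨Complex.arg z + 2 * π, by linarith [Complex.neg_pi_lt_arg z, pi_pos], ?_⟩
  have hval : osc v₀ e₀ (Complex.arg z + 2 * π) = 1 - e₀ - ‖z‖ := by
    rw [osc, cos_add_two_pi, sin_add_two_pi, Complex.cos_arg hz, Complex.sin_arg]
    field_simp
    simp only [z]
    linear_combination hnorm
  rw [hval]
  nlinarith [abs_le_of_sq_le_sq' (show (1 - e₀) ^ 2 ≤ ‖z‖ ^ 2 by nlinarith) hnorm_pos.le]

lemma abs_solV_add_abs_solE_ge {θ : ℝ} (hθ : 0 < osc v₀ e₀ θ) :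
    (|oscDeriv v₀ e₀ θ| + |1 - e₀|) * (osc v₀ e₀ θ)⁻¹ - 1 ≤ |solV v₀ e₀ θ| + |solE v₀ e₀ θ| := by
  have hV : |solV v₀ e₀ θ| = |oscDeriv v₀ e₀ θ| / osc v₀ e₀ θ := by
    rw [solV, abs_div, abs_of_pos hθ]
  have hE : |1 - e₀| / osc v₀ e₀ θ - 1 ≤ |solE v₀ e₀ θ| :=
    calc |1 - e₀| / osc v₀ e₀ θ - 1 = |(1 - e₀) / osc v₀ e₀ θ| - |1| := by
          rw [abs_div, abs_of_pos hθ, abs_one]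
      _ ≤ |(1 - e₀) / osc v₀ e₀ θ - 1| := abs_sub_abs_le_abs_sub _ _
      _ = |solE v₀ e₀ θ| := abs_sub_comm _ _
  rw [hV, add_mul, ← div_eq_mul_inv, ← div_eq_mul_inv]
  linarith

-- The numerator `|osc'| + |1 - e₀|` stays away from `0` at `t` because `(osc - (1 - e₀), osc')`
-- runs on a circle of radius `√(e₀² + v₀²)`.
lemma tendsto_abs_solV_add_abs_solE (h0 : e₀ ^ 2 + v₀ ^ 2 ≠ 0) {t : ℝ} (ht : osc v₀ e₀ t = 0)
    (hpos : ∀ᶠ θ in 𝓝[<] t, 0 < osc v₀ e₀ θ) :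
    Tendsto (fun θ => |solV v₀ e₀ θ| + |solE v₀ e₀ θ|) (𝓝[<] t) atTop := by
  have hnum_pos : 0 < |oscDeriv v₀ e₀ t| + |1 - e₀| := by
    have hcircle := osc_sub_sq_add_oscDeriv_sq v₀ e₀ t
    rw [ht] at hcircle
    by_contra! hle
    have := abs_nonneg (1 - e₀)
    have := abs_nonneg (oscDeriv v₀ e₀ t)
    have h1 : |oscDeriv v₀ e₀ t| = 0 := by linarith
    have h2 : |1 - e₀| = 0 := by linarith
    rw [abs_eq_zero] at h1 h2
    apply h0; rw [← hcircle, h1, h2]; ring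
  have hnum : Tendsto (fun θ => |oscDeriv v₀ e₀ θ| + |1 - e₀|) (𝓝[<] t)
      (𝓝 (|oscDeriv v₀ e₀ t| + |1 - e₀|)) :=
    ((continuous_oscDeriv v₀ e₀).abs.add continuous_const).continuousWithinAt
  have hosc : Tendsto (osc v₀ e₀) (𝓝[<] t) (𝓝[>] 0) := by
    rw [← ht]
    exact tendsto_nhdsWithin_iff.2 ⟨(continuous_osc v₀ e₀).continuousWithinAt, by rwa [ht]⟩
  have hlower := (hnum.pos_mul_atTop hnum_pos (tendsto_inv_nhdsGT_zero.comp hosc)).atTop_add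
    (tendsto_const_nhds (x := (-1 : ℝ)))
  refine tendsto_atTop_mono' _ ?_ hlower
  filter_upwards [hpos] with θ hθ
  simpa [sub_eq_add_neg] using abs_solV_add_abs_solE_ge hθ

lemma solvesOn_sol {t : ℝ} (hpos : ∀ θ ∈ Ico 0 t, 0 < osc v₀ e₀ θ) :
    SolvesOn (solV v₀ e₀) (solE v₀ e₀) t := fun θ h0 hθ =>
  have hne := (hpos θ ⟨h0, EReal.coe_lt_coe_iff.1 hθ⟩).ne'
  ⟨hasDerivAt_solV hne, hasDerivAt_solE hne⟩

lemma SolvesOn.eq_sol {v e : ℝ → ℝ} {T : EReal} (hsol : SolvesOn v e T) (hv0 : v 0 = v₀)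
    (he0 : e 0 = e₀) {t : ℝ} (hpos : ∀ θ ∈ Ico 0 t, 0 < osc v₀ e₀ θ) {θ : ℝ} (h0 : 0 ≤ θ)
    (hθT : (θ : EReal) < T) (hθt : θ < t) :
    v θ = solV v₀ e₀ θ ∧ e θ = solE v₀ e₀ θ :=
  Prod.ext_iff.1 <| eqOn_Icc_of_hasDerivAt_of_locallyLipschitz locallyLipschitz_field
    (f := fun s => (v s, e s)) (g := fun s => (solV v₀ e₀ s, solE v₀ e₀ s))
    (fun s hs => hsol.hasDerivAt_prod hs.1 ((EReal.coe_le_coe_iff.2 hs.2).trans_lt hθT))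
    (fun s hs => (solvesOn_sol hpos).hasDerivAt_prod hs.1
      (EReal.coe_lt_coe_iff.2 (hs.2.trans_lt hθt)))
    (by simp [hv0, he0, solV_zero, solE_zero]) ⟨h0, le_rfl⟩

end ColdPlasma

end

open ColdPlasma

theorem stmt2_general (v₀ e₀ : ℝ) (h : v₀^2 + 2 * e₀ - 1 ≥ 0)
    (v e : ℝ → ℝ) (T : EReal)
    (hsol : ∀ θ : ℝ, 0 ≤ θ → (θ : EReal) < T →
      HasDerivAt v (-(v θ)^2 - e θ) θ ∧ HasDerivAt e ((1 - e θ) * v θ) θ)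
    (hv0 : v 0 = v₀) (he0 : e 0 = e₀)
    (hmax : ∀ (T' : EReal) (v' e' : ℝ → ℝ), T < T' →
      (∀ θ : ℝ, 0 ≤ θ → (θ : EReal) < T' →
        HasDerivAt v' (-(v' θ)^2 - e' θ) θ ∧ HasDerivAt e' ((1 - e' θ) * v' θ) θ) →
      ¬(∀ θ : ℝ, 0 ≤ θ → (θ : EReal) < T → v' θ = v θ ∧ e' θ = e θ)) :
    ∃ Tr : ℝ, T = (Tr : EReal) ∧
      Filter.Tendsto (fun θ => |v θ| + |e θ|) (nhdsWithin Tr (Set.Iio Tr)) Filter.atTop := by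
  have hsol : SolvesOn v e T := hsol
  obtain ⟨θ₁, hθ₁, hosc₁⟩ := exists_osc_nonpos h
  obtain ⟨t, ⟨ht, -⟩, hzero, hpos⟩ :=
    exists_first_zero (continuous_osc v₀ e₀) hθ₁.le (by simp [osc_zero]) hosc₁
  have hradius : e₀ ^ 2 + v₀ ^ 2 ≠ 0 := by
    nlinarith [sq_nonneg e₀, sq_nonneg v₀, sq_nonneg (e₀ - 1)]
  have hblow := tendsto_abs_solV_add_abs_solE hradius hzero
    (by filter_upwards [Ioo_mem_nhdsLT ht] with θ hθ using hpos θ ⟨hθ.1.le, hθ.2⟩)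
  have hagree (htT : (t : EReal) ≤ T) :
      (fun θ => |solV v₀ e₀ θ| + |solE v₀ e₀ θ|) =ᶠ[𝓝[<] t] (fun θ => |v θ| + |e θ|) := by
    filter_upwards [Ioo_mem_nhdsLT ht] with θ hθ
    obtain ⟨hv, he⟩ :=
      hsol.eq_sol hv0 he0 hpos hθ.1.le ((EReal.coe_lt_coe_iff.2 hθ.2).trans_le htT) hθ.2
    rw [hv, he]
  have hTt : T = t := by
    refine le_antisymm (not_lt.1 fun htT => ?_) (not_lt.1 fun hTt => ?_)
    · obtain ⟨hv, he⟩ := hsol t ht.le htT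
      have hcont : ContinuousAt (fun θ => |v θ| + |e θ|) t :=
        hv.continuousAt.abs.add he.continuousAt.abs
      exact not_tendsto_nhds_of_tendsto_atTop (hblow.congr' (hagree htT.le)) _
        hcont.continuousWithinAt
    · refine hmax t _ _ hTt (solvesOn_sol hpos) fun θ h0 hθ => ?_
      obtain ⟨hv, he⟩ := hsol.eq_sol hv0 he0 hpos h0 hθ (EReal.coe_lt_coe_iff.1 (hθ.trans hTt))
      exact ⟨hv.symm, he.symm⟩
  exact ⟨t, hTt, hblow.congr' (hagree hTt.ge)⟩

/-- The maximal forward solution of `v' = -v² - e`, `e' = (1 - e) v`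
with initial data satisfying `v₀² + 2 e₀ - 1 ≥ 0` blows up in finite time:
its maximal interval of existence `[0, T)` is bounded and `|v| + |e| → ∞` as `θ → T⁻`. -/
theorem stmt2 (v₀ e₀ : ℝ) (h : v₀^2 + 2 * e₀ - 1 ≥ 0)
    (v e : ℝ → ℝ) (T : EReal) (hT : 0 < T)
    (hsol : ∀ θ : ℝ, 0 ≤ θ → (θ : EReal) < T →
      HasDerivAt v (-(v θ)^2 - e θ) θ ∧ HasDerivAt e ((1 - e θ) * v θ) θ)
    (hv0 : v 0 = v₀) (he0 : e 0 = e₀)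
    (hmax : ∀ (T' : EReal) (v' e' : ℝ → ℝ), T < T' →
      (∀ θ : ℝ, 0 ≤ θ → (θ : EReal) < T' →
        HasDerivAt v' (-(v' θ)^2 - e' θ) θ ∧ HasDerivAt e' ((1 - e' θ) * v' θ) θ) →
      ¬(∀ θ : ℝ, 0 ≤ θ → (θ : EReal) < T → v' θ = v θ ∧ e' θ = e θ)) :
    ∃ Tr : ℝ, T = (Tr : EReal) ∧
      Filter.Tendsto (fun θ => |v θ| + |e θ|) (nhdsWithin Tr (Set.Iio Tr)) Filter.atTop :=
  stmt2_general v₀ e₀ h v e T hsol hv0 he0 hmax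
end

section
/- Let (v,e) be the solution of the system v′ = −v² − e, e′ = (1 − e) v with initial data v(0) = v₀, e(0) = e₀ satisfying v₀² + 2 e₀ − 1 < 0. Then the solution exists for all θ ∈ ℝ, remains bounded, and is periodic with period 2π: v(θ + 2π) = v(θ) and e(θ + 2π) = e(θ) for all θ. -/
/-!
The substitution `v = q' / q`, `e = 1 - 1 / q` linearizes the system: the pair is a solution
whenever `q'' = 1 - q`, e.g. for `q = 1 + a cos θ + b sin θ`. Choosing `a = e₀ / (1 - e₀)` and
`b = v₀ / (1 - e₀)` matches the initial data, and the hypothesis `v₀² + 2 e₀ - 1 < 0` is exactly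
`a² + b² < 1`, which keeps `q` positive. The solution is therefore global and `2π`-periodic, and
being continuous it is bounded.
-/

open Real Function

section Linearization

variable {q q' : ℝ → ℝ} {θ : ℝ}

theorem hasDerivAt_div_of_deriv_eq_one_sub (hq : HasDerivAt q (q' θ) θ)
    (hq' : HasDerivAt q' (1 - q θ) θ) (h0 : q θ ≠ 0) :
    HasDerivAt (fun t => q' t / q t) (-(q' θ / q θ) ^ 2 - (1 - (q θ)⁻¹)) θ := by
  refine (hq'.div hq h0).congr_deriv ?_
  field_simp
  ring

theorem hasDerivAt_one_sub_inv (hq : HasDerivAt q (q' θ) θ) (h0 : q θ ≠ 0) :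
    HasDerivAt (fun t => 1 - (q t)⁻¹) ((1 - (1 - (q θ)⁻¹)) * (q' θ / q θ)) θ := by
  refine ((hasDerivAt_const θ 1).sub (hq.inv h0)).congr_deriv ?_
  field_simp
  ring

end Linearization

theorem Function.Periodic.exists_abs_add_abs_le {f g : ℝ → ℝ} {c : ℝ} (hf : Periodic f c)
    (hg : Periodic g c) (hc : c ≠ 0) (hf_cont : Continuous f) (hg_cont : Continuous g) :
    ∃ M, ∀ x, |f x| + |g x| ≤ M := by
  have hper : Periodic (fun x => |f x| + |g x|) c := fun x => by simp only [hf x, hg x]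
  obtain ⟨M, hM⟩ := (hper.compact_of_continuous hc (by fun_prop)).bddAbove
  exact ⟨M, fun x => hM (Set.mem_range_self x)⟩

namespace ColdPlasma

noncomputable def denom (a b θ : ℝ) : ℝ := 1 + a * cos θ + b * sin θ

variable {a b θ : ℝ}

theorem hasDerivAt_denom : HasDerivAt (denom a b) (b * cos θ - a * sin θ) θ := by
  have := ((hasDerivAt_cos θ).const_mul a).const_add 1 |>.add ((hasDerivAt_sin θ).const_mul b)
  exact this.congr_deriv (by ring)

theorem hasDerivAt_deriv_denom :
    HasDerivAt (fun t => b * cos t - a * sin t) (1 - denom a b θ) θ := by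
  have := ((hasDerivAt_cos θ).const_mul b).sub ((hasDerivAt_sin θ).const_mul a)
  exact this.congr_deriv (by simp only [denom]; ring)

theorem denom_pos (hab : a ^ 2 + b ^ 2 < 1) : 0 < denom a b θ := by
  -- Cauchy–Schwarz: `(a cos θ + b sin θ)² ≤ a² + b²`
  have hsq : (a * cos θ + b * sin θ) ^ 2 < 1 := by
    nlinarith [sin_sq_add_cos_sq θ, sq_nonneg (a * sin θ - b * cos θ)]
  have : -1 < a * cos θ + b * sin θ := by nlinarith
  simp only [denom]
  linarith

theorem denom_zero : denom a b 0 = 1 + a := by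
  simp [denom]

theorem denom_periodic : Periodic (denom a b) (2 * π) := fun θ => by
  simp only [denom, cos_add_two_pi, sin_add_two_pi]

end ColdPlasma

open ColdPlasma in
/-- The solution of `v' = -v² - e`, `e' = (1 - e) v` with initial data
satisfying `v₀² + 2 e₀ - 1 < 0` exists for all `θ ∈ ℝ`, remains bounded, and is
`2π`-periodic. -/
theorem stmt3 (v₀ e₀ : ℝ) (h : v₀^2 + 2 * e₀ - 1 < 0) :
    ∃ v e : ℝ → ℝ,
      (∀ θ : ℝ, HasDerivAt v (-(v θ)^2 - e θ) θ ∧ HasDerivAt e ((1 - e θ) * v θ) θ) ∧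
      v 0 = v₀ ∧ e 0 = e₀ ∧
      (∃ M : ℝ, ∀ θ : ℝ, |v θ| + |e θ| ≤ M) ∧
      (∀ θ : ℝ, v (θ + 2 * Real.pi) = v θ ∧ e (θ + 2 * Real.pi) = e θ) := by
  have he₀ : 0 < 1 - e₀ := by nlinarith [sq_nonneg v₀]
  have hq0 : 1 + e₀ / (1 - e₀) = (1 - e₀)⁻¹ := by field_simp; ring
  set a := e₀ / (1 - e₀)
  set b := v₀ / (1 - e₀)
  have hab : a ^ 2 + b ^ 2 < 1 := by
    rw [div_pow, div_pow, ← add_div, div_lt_one (by positivity)]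
    nlinarith
  have hq : ∀ θ, denom a b θ ≠ 0 := fun θ => (denom_pos hab).ne'
  have hsol (θ : ℝ) :=
    And.intro (hasDerivAt_div_of_deriv_eq_one_sub hasDerivAt_denom hasDerivAt_deriv_denom (hq θ))
      (hasDerivAt_one_sub_inv (q' := fun t => b * cos t - a * sin t) hasDerivAt_denom (hq θ))
  have hv_per : Periodic (fun θ => (b * cos θ - a * sin θ) / denom a b θ) (2 * π) :=
    fun θ => by simp only [denom_periodic θ, cos_add_two_pi, sin_add_two_pi]
  have he_per : Periodic (fun θ => 1 - (denom a b θ)⁻¹) (2 * π) :=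
    fun θ => by simp only [denom_periodic θ]
  refine ⟨_, _, hsol, ?_, ?_, ?_, fun θ => ⟨hv_per θ, he_per θ⟩⟩
  · simp only [denom_zero, hq0, cos_zero, sin_zero, mul_one, mul_zero, sub_zero, div_inv_eq_mul]
    exact div_mul_cancel₀ v₀ he₀.ne'
  · simp only [denom_zero, hq0, inv_inv]
    ring
  · exact hv_per.exists_abs_add_abs_le he_per two_pi_pos.ne'
      (continuous_iff_continuousAt.2 fun θ => (hsol θ).1.continuousAt)
      (continuous_iff_continuousAt.2 fun θ => (hsol θ).2.continuousAt)
end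

section
/- For every C ∈ (−1, 0), setting e₋ = 1 + (1 − √(1+C))/C and e₊ = 1 + (1 + √(1+C))/C, the definite integral ∫_{e₋}^{e₊} de / ((e − 1) √(C (e − 1)² − 2e + 1)) equals π. -/
/-!
Writing `s = √(1 + C) ∈ (0, 1)`, the radicand is `C (e - 1)² - 2e + 1 = s² (e - 1)² - e²`, whose
roots are `e₋ = s / (1 + s)` and `e₊ = s / (s - 1)`. The function `arcsin (e / ((e - 1) s))` is an
antiderivative of the integrand on `(e₊, e₋)` and equals `∓π/2` at `e₋`, `e₊`. The integral is
improper at both ends, but the integrand has constant sign there, which makes it integrable.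
-/

open Real Set MeasureTheory intervalIntegral

theorem intervalIntegral.integral_eq_sub_of_hasDerivAt_of_nonpos {f f' : ℝ → ℝ} {a b : ℝ}
    (hab : a ≤ b) (hcont : ContinuousOn f (Icc a b))
    (hderiv : ∀ x ∈ Ioo a b, HasDerivAt f (f' x) x) (hf' : ∀ x ∈ Ioo a b, f' x ≤ 0) :
    ∫ x in a..b, f' x = f b - f a := by
  have hint : IntegrableOn (fun x => -f' x) (Ioc a b) :=
    integrableOn_deriv_of_nonneg hcont.neg (fun x hx => (hderiv x hx).neg)
      fun x hx => neg_nonneg.2 (hf' x hx)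
  refine integral_eq_sub_of_hasDerivAt_of_le hab hcont hderiv ?_
  simpa [intervalIntegrable_iff_integrableOn_Ioc_of_le hab] using hint.neg

section

variable {s : ℝ}

lemma hasDerivAt_arcsin_div_sub_one_mul (hs : 0 < s) {e : ℝ} (he : e < 1)
    (hQ : 0 < s ^ 2 * (e - 1) ^ 2 - e ^ 2) :
    HasDerivAt (fun x => arcsin (x / ((x - 1) * s)))
      (1 / ((e - 1) * √(s ^ 2 * (e - 1) ^ 2 - e ^ 2))) e := by
  have he1 : e - 1 ≠ 0 := by linarith
  have : 1 - e ≠ 0 := by linarith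
  have h1e : 0 < (1 - e) * s := by nlinarith
  have hsq : 1 - (e / ((e - 1) * s)) ^ 2
      = (s ^ 2 * (e - 1) ^ 2 - e ^ 2) / ((1 - e) * s) ^ 2 := by
    field_simp
    ring
  obtain ⟨hgt, hlt⟩ : -1 < e / ((e - 1) * s) ∧ e / ((e - 1) * s) < 1 := by
    rw [← abs_lt, ← sq_lt_one_iff_abs_lt_one]
    have : 0 < 1 - (e / ((e - 1) * s)) ^ 2 := by rw [hsq]; positivity
    linarith
  have hg : HasDerivAt (fun x => x / ((x - 1) * s))
      ((1 * ((e - 1) * s) - e * (1 * s)) / ((e - 1) * s) ^ 2) e :=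
    (hasDerivAt_id e).div (((hasDerivAt_id e).sub_const 1).mul_const s) (mul_ne_zero he1 hs.ne')
  refine ((hasDerivAt_arcsin hgt.ne' hlt.ne).comp e hg).congr_deriv ?_
  rw [hsq, sqrt_div hQ.le, sqrt_sq h1e.le]
  field_simp
  ring

lemma sq_mul_sub_one_sq_sub_sq_pos (hs : 0 < s) (hs1 : s < 1) {e : ℝ}
    (he : e ∈ Ioo (s / (s - 1)) (s / (1 + s))) : 0 < s ^ 2 * (e - 1) ^ 2 - e ^ 2 := by
  obtain ⟨h₁, h₂⟩ := he
  rw [div_lt_iff_of_neg (by linarith)] at h₁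
  rw [lt_div_iff₀ (by linarith)] at h₂
  nlinarith

theorem integral_one_div_sub_one_mul_sqrt_eq_pi (hs : 0 < s) (hs1 : s < 1) :
    ∫ e in s / (1 + s)..s / (s - 1), 1 / ((e - 1) * √(s ^ 2 * (e - 1) ^ 2 - e ^ 2)) = π := by
  have hlt_one : ∀ e ≤ s / (1 + s), e < 1 := fun e he =>
    he.trans_lt ((div_lt_one (by linarith)).2 (by linarith))
  have hle : s / (s - 1) ≤ s / (1 + s) :=
    (div_nonpos_of_nonneg_of_nonpos hs.le (by linarith)).trans (by positivity)
  have hcont : ContinuousOn (fun x => arcsin (x / ((x - 1) * s)))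
      (Icc (s / (s - 1)) (s / (1 + s))) :=
    continuous_arcsin.comp_continuousOn <| continuousOn_id.div (by fun_prop) fun x hx =>
      mul_ne_zero (sub_ne_zero.2 (hlt_one x hx.2).ne) hs.ne'
  have hderiv : ∀ e ∈ Ioo (s / (s - 1)) (s / (1 + s)), HasDerivAt
      (fun x => arcsin (x / ((x - 1) * s))) (1 / ((e - 1) * √(s ^ 2 * (e - 1) ^ 2 - e ^ 2))) e :=
    fun e he => hasDerivAt_arcsin_div_sub_one_mul hs (hlt_one e he.2.le)
      (sq_mul_sub_one_sq_sub_sq_pos hs hs1 he)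
  have hnonpos : ∀ e ∈ Ioo (s / (s - 1)) (s / (1 + s)),
      1 / ((e - 1) * √(s ^ 2 * (e - 1) ^ 2 - e ^ 2)) ≤ 0 := fun e he =>
    one_div_nonpos.2 <| mul_nonpos_of_nonpos_of_nonneg
      (by linarith [hlt_one e he.2.le]) (sqrt_nonneg _)
  have hlow : s / (1 + s) / ((s / (1 + s) - 1) * s) = -1 := by
    field_simp
    ring
  have hhigh : s / (s - 1) / ((s / (s - 1) - 1) * s) = 1 := by
    have : s - 1 ≠ 0 := by linarith
    field_simp
    ring
  rw [integral_symm, integral_eq_sub_of_hasDerivAt_of_nonpos hle hcont hderiv hnonpos,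
    hlow, hhigh, arcsin_neg_one, arcsin_one]
  ring

end

/-- For `C ∈ (-1,0)`, with `e₋ = 1 + (1 - √(1+C))/C` and
`e₊ = 1 + (1 + √(1+C))/C`, the integral
`∫_{e₋}^{e₊} de / ((e-1) √(C(e-1)² - 2e + 1))` equals `π`. -/
theorem stmt4 (C : ℝ) (hC : C ∈ Set.Ioo (-1 : ℝ) 0) :
    ∫ e in (1 + (1 - Real.sqrt (1 + C)) / C)..(1 + (1 + Real.sqrt (1 + C)) / C),
      1 / ((e - 1) * Real.sqrt (C * (e - 1)^2 - 2 * e + 1)) = Real.pi := by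
  obtain ⟨hC₁, hC₀⟩ := hC
  set s := √(1 + C)
  have hs : 0 < s := sqrt_pos.2 (by linarith)
  have hs1 : s < 1 := (sqrt_lt' one_pos).2 (by linarith)
  have hC : C = (s - 1) * (1 + s) := by
    linear_combination -sq_sqrt (by linarith : 0 ≤ 1 + C)
  have : s - 1 ≠ 0 := by linarith
  have hlow : 1 + (1 - s) / C = s / (1 + s) := by
    rw [hC]; field_simp; ring
  have hhigh : 1 + (1 + s) / C = s / (s - 1) := by
    rw [hC]; field_simp; ring
  have hQ : ∀ e, C * (e - 1) ^ 2 - 2 * e + 1 = s ^ 2 * (e - 1) ^ 2 - e ^ 2 := fun e => by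
    rw [hC]; ring
  simp_rw [hQ, hlow, hhigh]
  exact integral_one_div_sub_one_mul_sqrt_eq_pi hs hs1
end

section
/- Let s ∈ ℝ with |s| < 1 and θ₀ ∈ ℝ. Then the functions W(θ) = s cos(θ + θ₀)/(1 + s sin(θ + θ₀)) and D(θ) = s sin(θ + θ₀)/(1 + s sin(θ + θ₀)) are well defined and differentiable for all θ ∈ ℝ, and satisfy the system W′ = −W² − D, D′ = (1 − D) W for all θ ∈ ℝ. -/
/-! The identities `W' = -W² - D` and `D' = (1 - D) W` hold for `W = u / (1 + v)`, `D = v / (1 + v)`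
whenever `(u, v)` moves along the rotation field `u' = -v`, `v' = u`; the pair
`(s cos (θ + θ₀), s sin (θ + θ₀))` does, and `|s| < 1` keeps `1 + s sin (θ + θ₀)` positive. -/

section RotationQuotient

variable {𝕜 : Type*} [NontriviallyNormedField 𝕜] {u v : 𝕜 → 𝕜} {v' x : 𝕜}

theorem HasDerivAt.div_one_add_self (hv : HasDerivAt v v' x) (h : 1 + v x ≠ 0) :
    HasDerivAt (fun t => v t / (1 + v t)) ((1 - v x / (1 + v x)) * (v' / (1 + v x))) x := by
  refine (hv.fun_div (hv.const_add 1) h).congr_deriv ?_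
  field_simp

theorem HasDerivAt.div_one_add_of_rotation (hu : HasDerivAt u (-v x) x)
    (hv : HasDerivAt v (u x) x) (h : 1 + v x ≠ 0) :
    HasDerivAt (fun t => u t / (1 + v t)) (-(u x / (1 + v x)) ^ 2 - v x / (1 + v x)) x := by
  refine (hu.fun_div (hv.const_add 1) h).congr_deriv ?_
  field_simp
  ring

end RotationQuotient

theorem Real.one_add_mul_sin_pos {s : ℝ} (hs : |s| < 1) (x : ℝ) : 0 < 1 + s * Real.sin x := by
  have : |s * Real.sin x| < 1 := by
    rw [abs_mul]
    exact lt_of_le_of_lt (mul_le_of_le_one_right (abs_nonneg s) (Real.abs_sin_le_one x)) hs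
  linarith [neg_abs_le (s * Real.sin x)]

/-- For `|s| < 1`, the functions
`W(θ) = s cos(θ+θ₀)/(1 + s sin(θ+θ₀))` and `D(θ) = s sin(θ+θ₀)/(1 + s sin(θ+θ₀))`
are well defined and differentiable on all of `ℝ` and satisfy
`W' = -W² - D`, `D' = (1 - D) W`. -/
theorem stmt6 (s θ₀ : ℝ) (hs : |s| < 1) :
    ∀ θ : ℝ,
      1 + s * Real.sin (θ + θ₀) ≠ 0 ∧
      HasDerivAt (fun t => s * Real.cos (t + θ₀) / (1 + s * Real.sin (t + θ₀)))
        (-(s * Real.cos (θ + θ₀) / (1 + s * Real.sin (θ + θ₀)))^2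
          - s * Real.sin (θ + θ₀) / (1 + s * Real.sin (θ + θ₀))) θ ∧
      HasDerivAt (fun t => s * Real.sin (t + θ₀) / (1 + s * Real.sin (t + θ₀)))
        ((1 - s * Real.sin (θ + θ₀) / (1 + s * Real.sin (θ + θ₀)))
          * (s * Real.cos (θ + θ₀) / (1 + s * Real.sin (θ + θ₀)))) θ := by
  intro θ
  have hshift : HasDerivAt (fun t : ℝ => t + θ₀) 1 θ := (hasDerivAt_id θ).add_const θ₀
  have hsin : HasDerivAt (fun t => s * Real.sin (t + θ₀)) (s * Real.cos (θ + θ₀)) θ := by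
    simpa using hshift.sin.const_mul s
  have hcos : HasDerivAt (fun t => s * Real.cos (t + θ₀)) (-(s * Real.sin (θ + θ₀))) θ := by
    simpa using hshift.cos.const_mul s
  have hne : 1 + s * Real.sin (θ + θ₀) ≠ 0 := (Real.one_add_mul_sin_pos hs _).ne'
  exact ⟨hne, hcos.div_one_add_of_rotation hsin hne, hsin.div_one_add_self hne⟩
end

section
/- For C₁ > 2, let P₊ = √(C₁² − 4)/2 and define the period T(C₁) = 2 ∫_{−P₊}^{P₊} dP / √(C₁ − 2√(1+P²)). Then T(C₁) > 2π for every C₁ > 2, and T(C₁) → 2π as C₁ → 2⁺. -/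
/-!
Write `s = √(1 + P²)`. Since `(C₁ - 2s)(C₁ + 2s) = 4(P₊² - P²)`, the integrand of `T(C₁)` is
`√(C₁ + 2s) / 2` times the arcsine weight `1 / √(P₊² - P²)`, whose integral over `[-P₊, P₊]` is `π`.
On that interval `1 ≤ s ≤ C₁ / 2`, so `√(C₁ + 2) π ≤ T(C₁) ≤ √(2 C₁) π`: the lower bound exceeds
`2π`, and both bounds tend to `2π` as `C₁ → 2⁺`.
-/

open intervalIntegral Filter

open Real Set MeasureTheory Topology

theorem hasDerivAt_arcsin_div {a x : ℝ} (ha : 0 < a) (hx : x ∈ Ioo (-a) a) :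
    HasDerivAt (fun y => arcsin (y / a)) (1 / √(a ^ 2 - x ^ 2)) x := by
  have hxa : x / a ∈ Ioo (-1) 1 := by
    rw [mem_Ioo, lt_div_iff₀ ha, div_lt_iff₀ ha]
    exact ⟨by linarith [hx.1], by linarith [hx.2]⟩
  have hscale : √(a ^ 2 - x ^ 2) = a * √(1 - (x / a) ^ 2) := by
    rw [← sqrt_sq ha.le, ← sqrt_mul (sq_nonneg a), sqrt_sq ha.le]
    congr 1
    field_simp
  refine ((hasDerivAt_arcsin hxa.1.ne' hxa.2.ne).comp x
    ((hasDerivAt_id x).div_const a)).congr_deriv ?_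
  rw [hscale]
  field_simp

theorem intervalIntegrable_one_div_sqrt_sq_sub_sq {a : ℝ} (ha : 0 < a) :
    IntervalIntegrable (fun x => 1 / √(a ^ 2 - x ^ 2)) volume (-a) a := by
  have hle : -a ≤ a := by linarith
  refine intervalIntegrable_deriv_of_nonneg (g := fun y => arcsin (y / a))
    (by fun_prop) (fun x hx => ?_) (fun x _ => by positivity)
  rw [min_eq_left hle, max_eq_right hle] at hx
  exact hasDerivAt_arcsin_div ha hx

theorem integral_one_div_sqrt_sq_sub_sq {a : ℝ} (ha : 0 < a) :
    ∫ x in (-a)..a, 1 / √(a ^ 2 - x ^ 2) = π := by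
  rw [integral_eq_sub_of_hasDerivAt_of_le (by linarith) (by fun_prop)
    (fun x hx => hasDerivAt_arcsin_div ha hx) (intervalIntegrable_one_div_sqrt_sq_sub_sq ha)]
  simp only [neg_div, div_self ha.ne', arcsin_one, arcsin_neg]
  ring

theorem one_div_sqrt_eq_sqrt_div_sqrt_mul (u : ℝ) {v : ℝ} (hv : 0 < v) :
    1 / √u = √v / √(u * v) := by
  rw [sqrt_mul' u hv.le, div_mul_cancel_right₀ (sqrt_pos.mpr hv).ne', one_div]

/- Both sides vanish where `C - 2 * √(1 + x ^ 2) ≤ 0`, so the identity holds for every `x`. -/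
theorem one_div_sqrt_sub_two_mul_sqrt_one_add_sq {C : ℝ} (hC : 2 ≤ C) (x : ℝ) :
    1 / √(C - 2 * √(1 + x ^ 2)) =
      √(C + 2 * √(1 + x ^ 2)) / 2 * (1 / √((√(C ^ 2 - 4) / 2) ^ 2 - x ^ 2)) := by
  have hs : √(1 + x ^ 2) ^ 2 = 1 + x ^ 2 := sq_sqrt (by positivity)
  have ha : (√(C ^ 2 - 4) / 2) ^ 2 = (C ^ 2 - 4) / 4 := by
    rw [div_pow, sq_sqrt (by nlinarith)]
    norm_num
  have hprod : (C - 2 * √(1 + x ^ 2)) * (C + 2 * √(1 + x ^ 2)) =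
      2 ^ 2 * ((√(C ^ 2 - 4) / 2) ^ 2 - x ^ 2) := by
    rw [ha]; linear_combination (-4) * hs
  rw [one_div_sqrt_eq_sqrt_div_sqrt_mul _ (v := C + 2 * √(1 + x ^ 2)) (by positivity), hprod,
    sqrt_mul (by positivity), sqrt_sq (by norm_num)]
  ring

theorem mul_integral_le_integral_mul {a b m : ℝ} {g w : ℝ → ℝ} (hab : a ≤ b)
    (hw : IntervalIntegrable w volume a b) (hw0 : ∀ x ∈ Icc a b, 0 ≤ w x)
    (hg : ContinuousOn g (Icc a b)) (hm : ∀ x ∈ Icc a b, m ≤ g x) :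
    m * ∫ x in a..b, w x ≤ ∫ x in a..b, g x * w x := by
  rw [← intervalIntegral.integral_const_mul]
  refine integral_mono_on hab (hw.const_mul m) (hw.continuousOn_mul ?_)
    fun x hx => mul_le_mul_of_nonneg_right (hm x hx) (hw0 x hx)
  rwa [uIcc_of_le hab]

theorem integral_mul_le_mul_integral {a b M : ℝ} {g w : ℝ → ℝ} (hab : a ≤ b)
    (hw : IntervalIntegrable w volume a b) (hw0 : ∀ x ∈ Icc a b, 0 ≤ w x)
    (hg : ContinuousOn g (Icc a b)) (hM : ∀ x ∈ Icc a b, g x ≤ M) :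
    ∫ x in a..b, g x * w x ≤ M * ∫ x in a..b, w x := by
  rw [← intervalIntegral.integral_const_mul]
  refine integral_mono_on hab (hw.continuousOn_mul ?_) (hw.const_mul M)
    fun x hx => mul_le_mul_of_nonneg_right (hM x hx) (hw0 x hx)
  rwa [uIcc_of_le hab]

noncomputable def period (C : ℝ) : ℝ :=
  2 * ∫ P in (-(√(C ^ 2 - 4) / 2))..(√(C ^ 2 - 4) / 2), 1 / √(C - 2 * √(1 + P ^ 2))

theorem two_mul_sqrt_one_add_sq_le {C x : ℝ} (hC : 2 ≤ C)
    (hx : x ∈ Icc (-(√(C ^ 2 - 4) / 2)) (√(C ^ 2 - 4) / 2)) :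
    2 * √(1 + x ^ 2) ≤ C := by
  have hx2 : x ^ 2 ≤ (√(C ^ 2 - 4) / 2) ^ 2 := sq_le_sq' hx.1 hx.2
  rw [div_pow, sq_sqrt (by nlinarith)] at hx2
  have : √(1 + x ^ 2) ≤ C / 2 := (sqrt_le_left (by linarith)).mpr (by linarith)
  linarith

theorem period_eq_integral_mul_weight {C : ℝ} (hC : 2 ≤ C) :
    period C = ∫ P in (-(√(C ^ 2 - 4) / 2))..(√(C ^ 2 - 4) / 2),
      √(C + 2 * √(1 + P ^ 2)) * (1 / √((√(C ^ 2 - 4) / 2) ^ 2 - P ^ 2)) := by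
  simp_rw [period, one_div_sqrt_sub_two_mul_sqrt_one_add_sq hC,
    ← intervalIntegral.integral_const_mul]
  congr 1 with P
  ring

theorem period_mem_Icc {C : ℝ} (hC : 2 < C) :
    period C ∈ Icc (√(C + 2) * π) (√(2 * C) * π) := by
  set a := √(C ^ 2 - 4) / 2
  have ha : 0 < a := by
    have : 0 < C ^ 2 - 4 := by nlinarith
    positivity
  have hw := intervalIntegrable_one_div_sqrt_sq_sub_sq ha
  have hw0 : ∀ x ∈ Icc (-a) a, 0 ≤ 1 / √(a ^ 2 - x ^ 2) := fun _ _ => by positivity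
  have hg : ContinuousOn (fun x => √(C + 2 * √(1 + x ^ 2))) (Icc (-a) a) := by fun_prop
  rw [period_eq_integral_mul_weight hC.le, ← integral_one_div_sqrt_sq_sub_sq ha]
  constructor
  · refine mul_integral_le_integral_mul (neg_le_self ha.le) hw hw0 hg fun x _ => ?_
    have : 1 ≤ √(1 + x ^ 2) := one_le_sqrt.mpr (by nlinarith)
    exact sqrt_le_sqrt (by linarith)
  · refine integral_mul_le_mul_integral (neg_le_self ha.le) hw hw0 hg fun x hx => ?_
    exact sqrt_le_sqrt (by linarith [two_mul_sqrt_one_add_sq_le hC.le hx])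

theorem two_mul_pi_lt_period {C : ℝ} (hC : 2 < C) : 2 * π < period C := by
  have h2 : 2 < √(C + 2) := lt_sqrt_of_sq_lt (by linarith)
  calc 2 * π < √(C + 2) * π := by gcongr
    _ ≤ period C := (period_mem_Icc hC).1

theorem tendsto_period : Tendsto period (𝓝[>] 2) (𝓝 (2 * π)) := by
  have hlim : ∀ f : ℝ → ℝ, Continuous f → f 2 = 2 ^ 2 →
      Tendsto (fun C => √(f C) * π) (𝓝[>] 2) (𝓝 (2 * π)) := by
    intro f hf hf2
    have h : Tendsto (fun C => √(f C) * π) (𝓝[>] 2) (𝓝 (√(f 2) * π)) :=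
      ((hf.sqrt.mul continuous_const).tendsto 2).mono_left nhdsWithin_le_nhds
    rwa [hf2, sqrt_sq zero_le_two] at h
  refine tendsto_of_tendsto_of_tendsto_of_le_of_le'
    (hlim (· + 2) (by fun_prop) (by norm_num)) (hlim (2 * ·) (by fun_prop) (by norm_num)) ?_ ?_
  all_goals filter_upwards [self_mem_nhdsWithin] with C hC
  exacts [(period_mem_Icc hC).1, (period_mem_Icc hC).2]

/-- For `C₁ > 2`, with `P₊ = √(C₁² - 4)/2`, the period
`T(C₁) = 2 ∫_{-P₊}^{P₊} dP/√(C₁ - 2√(1+P²))` satisfies `T(C₁) > 2π`, and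
`T(C₁) → 2π` as `C₁ → 2⁺`. -/
theorem stmt8 :
    (∀ C₁ : ℝ, 2 < C₁ →
      2 * Real.pi <
        2 * ∫ P in (-(Real.sqrt (C₁^2 - 4) / 2))..(Real.sqrt (C₁^2 - 4) / 2),
          1 / Real.sqrt (C₁ - 2 * Real.sqrt (1 + P^2))) ∧
    Tendsto
      (fun C₁ : ℝ =>
        2 * ∫ P in (-(Real.sqrt (C₁^2 - 4) / 2))..(Real.sqrt (C₁^2 - 4) / 2),
          1 / Real.sqrt (C₁ - 2 * Real.sqrt (1 + P^2)))
      (nhdsWithin 2 (Set.Ioi 2)) (nhds (2 * Real.pi)) :=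
  ⟨fun _ => two_mul_pi_lt_period, tendsto_period⟩
end

section
/- Let (P, E, p, e) : I → ℝ⁴ be a differentiable solution on an interval I of the extended characteristic system P′ = −E, E′ = P/√(1+P²), p′ = −e − p² (1+P²)^{−3/2}, e′ = (1−e) p (1+P²)^{−3/2}, and suppose p(θ) ≠ 0 for all θ ∈ I. Then the functions u = e/p and λ = (1−e)/p satisfy u′ = u² + K and λ′ = λ u on I, where K(θ) = (1 + P(θ)²)^{−3/2}. -/
/-! By the quotient rule, in `(e/p)'` the `K`-terms of `e'` and `p'` combine to `(1 - e)K + eK = K`,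
while in `((1 - e)/p)'` they cancel. -/

section Riccati

variable {p e : ℝ → ℝ} {K x : ℝ}

theorem hasDerivAt_div_eq_sq_add (hp : HasDerivAt p (-e x - p x ^ 2 * K) x)
    (he : HasDerivAt e ((1 - e x) * p x * K) x) (hx : p x ≠ 0) :
    HasDerivAt (fun t => e t / p t) ((e x / p x) ^ 2 + K) x := by
  refine (he.div hp hx).congr_deriv ?_
  field_simp
  ring

theorem hasDerivAt_one_sub_div_eq_mul (hp : HasDerivAt p (-e x - p x ^ 2 * K) x)
    (he : HasDerivAt e ((1 - e x) * p x * K) x) (hx : p x ≠ 0) :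
    HasDerivAt (fun t => (1 - e t) / p t) ((1 - e x) / p x * (e x / p x)) x := by
  refine (((hasDerivAt_const x 1).sub he).div hp hx).congr_deriv ?_
  simp only [Pi.sub_apply]
  field_simp
  ring

end Riccati

theorem stmt14_general (I : Set ℝ) (P p e : ℝ → ℝ)
    (hp : ∀ θ ∈ I, HasDerivAt p (-(e θ) - (p θ)^2 / (Real.sqrt (1 + (P θ)^2))^3) θ)
    (he : ∀ θ ∈ I, HasDerivAt e ((1 - e θ) * p θ / (Real.sqrt (1 + (P θ)^2))^3) θ)
    (hne : ∀ θ ∈ I, p θ ≠ 0) :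
    ∀ θ ∈ I,
      HasDerivAt (fun t => e t / p t)
        ((e θ / p θ)^2 + 1 / (Real.sqrt (1 + (P θ)^2))^3) θ ∧
      HasDerivAt (fun t => (1 - e t) / p t)
        (((1 - e θ) / p θ) * (e θ / p θ)) θ := by
  intro θ hθ
  have hp' := hp θ hθ
  have he' := he θ hθ
  rw [div_eq_mul_one_div] at hp' he'
  exact ⟨hasDerivAt_div_eq_sq_add hp' he' (hne θ hθ),
    hasDerivAt_one_sub_div_eq_mul hp' he' (hne θ hθ)⟩

/-- Along a differentiable solution `(P, E, p, e)` of the extended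
characteristic system `P' = -E`, `E' = P/√(1+P²)`, `p' = -e - p²(1+P²)^{-3/2}`,
`e' = (1-e) p (1+P²)^{-3/2}` with `p ≠ 0`, the functions `u = e/p` and
`λ = (1-e)/p` satisfy `u' = u² + K` and `λ' = λ u`, where `K = (1+P²)^{-3/2}`. -/
theorem stmt14 (I : Set ℝ) (P E p e : ℝ → ℝ)
    (hP : ∀ θ ∈ I, HasDerivAt P (-(E θ)) θ)
    (hE : ∀ θ ∈ I, HasDerivAt E (P θ / Real.sqrt (1 + (P θ)^2)) θ)
    (hp : ∀ θ ∈ I, HasDerivAt p (-(e θ) - (p θ)^2 / (Real.sqrt (1 + (P θ)^2))^3) θ)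
    (he : ∀ θ ∈ I, HasDerivAt e ((1 - e θ) * p θ / (Real.sqrt (1 + (P θ)^2))^3) θ)
    (hne : ∀ θ ∈ I, p θ ≠ 0) :
    ∀ θ ∈ I,
      HasDerivAt (fun t => e t / p t)
        ((e θ / p θ)^2 + 1 / (Real.sqrt (1 + (P θ)^2))^3) θ ∧
      HasDerivAt (fun t => (1 - e t) / p t)
        (((1 - e θ) / p θ) * (e θ / p θ)) θ :=
  stmt14_general I P p e hp he hne
end

section
/- Let w ∈ ℝ and let (𝒫, ℰ) : I → ℝ² be a differentiable solution on an interval I of the traveling-wave system (−w + 𝒫/√(1+𝒫²)) 𝒫′ = −ℰ, (−w + 𝒫/√(1+𝒫²)) ℰ′ = 𝒫/√(1+𝒫²). Then the quantity 2(√(1+𝒫²) − 1) + ℰ² is constant on I. -/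
/-!
Write `V = 𝒫/√(1+𝒫²)` for the velocity. Multiplying `V 𝒫' + ℰ ℰ'` by the common factor
`-w + V` of the system gives `-V ℰ + ℰ V = 0`; where that factor vanishes, the system itself
forces `ℰ = V = 0`. So `V 𝒫' + ℰ ℰ' = 0` everywhere, and this is half the derivative of
`2(√(1+𝒫²) - 1) + ℰ²`, because `(√(1+𝒫²))' = V 𝒫'`.
-/

theorem Convex.exists_eq_const_of_hasDerivWithinAt_zero {𝕜 G : Type*} [RCLike 𝕜]
    [NormedAddCommGroup G] [NormedSpace 𝕜 G] {s : Set 𝕜} {f : 𝕜 → G} (hs : Convex ℝ s)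
    (hf : ∀ x ∈ s, HasDerivWithinAt f 0 s x) : ∃ c, ∀ x ∈ s, f x = c := by
  rcases s.eq_empty_or_nonempty with rfl | ⟨x₀, hx₀⟩
  · exact ⟨0, fun _ h => h.elim⟩
  refine ⟨f x₀, fun x hx => ?_⟩
  have := hs.norm_image_sub_le_of_norm_hasDerivWithin_le hf (fun _ _ => norm_zero.le) hx₀ hx
  rwa [zero_mul, norm_le_zero_iff, sub_eq_zero] at this

theorem HasDerivAt.sqrt_one_add_sq {f : ℝ → ℝ} {f' x : ℝ} (hf : HasDerivAt f f' x) :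
    HasDerivAt (fun y => √(1 + f y ^ 2)) (f x / √(1 + f x ^ 2) * f') x := by
  convert ((hf.fun_pow 2).const_add 1).sqrt (by positivity) using 1
  have : √(1 + f x ^ 2) ≠ 0 := by positivity
  field_simp
  ring

theorem travelingWave_flux_eq_zero {w v p' e e' : ℝ} (h₁ : (-w + v) * p' = -e)
    (h₂ : (-w + v) * e' = v) : v * p' + e * e' = 0 := by
  have : (-w + v) * (v * p' + e * e') = 0 := by linear_combination v * h₁ + e * h₂
  rcases mul_eq_zero.mp this with ha | h
  · rw [ha, zero_mul] at h₁ h₂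
    rw [← h₂, zero_eq_neg.mp h₁]
    ring
  · exact h

/-- Along any differentiable solution `(𝒫, ℰ)` of the traveling-wave
system `(-w + 𝒫/√(1+𝒫²)) 𝒫' = -ℰ`, `(-w + 𝒫/√(1+𝒫²)) ℰ' = 𝒫/√(1+𝒫²)` on an
interval, the quantity `2(√(1+𝒫²) - 1) + ℰ²` is constant. -/
theorem stmt18 (w : ℝ) (I : Set ℝ) (hI : I.OrdConnected) (P E dP dE : ℝ → ℝ)
    (hP : ∀ ξ ∈ I, HasDerivAt P (dP ξ) ξ)
    (hE : ∀ ξ ∈ I, HasDerivAt E (dE ξ) ξ)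
    (heq1 : ∀ ξ ∈ I, (-w + P ξ / Real.sqrt (1 + (P ξ)^2)) * dP ξ = -(E ξ))
    (heq2 : ∀ ξ ∈ I,
      (-w + P ξ / Real.sqrt (1 + (P ξ)^2)) * dE ξ = P ξ / Real.sqrt (1 + (P ξ)^2)) :
    ∃ c : ℝ, ∀ ξ ∈ I, 2 * (Real.sqrt (1 + (P ξ)^2) - 1) + (E ξ)^2 = c := by
  refine hI.convex.exists_eq_const_of_hasDerivWithinAt_zero fun ξ hξ => ?_
  refine ((((hP ξ hξ).sqrt_one_add_sq.sub_const 1).const_mul 2).add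
    ((hE ξ hξ).fun_pow 2)).hasDerivWithinAt.congr_deriv ?_
  linear_combination 2 * travelingWave_flux_eq_zero (heq1 ξ hξ) (heq2 ξ hξ)
end
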